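/- Under the kernel hypotheses, for every x₀ ∈ ℂ \ S and every i ∈ {1,…,m}: ħ (∂_x K)(x₀, s_i) = −1/(x₀ − s_i) + V′(s_i) K(x₀, s_i) − 2ħ ∑_{j≠i} (K(x₀, s_i) − K(x₀, s_j))/(s_i − s_j). -/

import Mathlib

/-!
Multiplying the equation by `x - s k` and letting `x → s k` shows, since `K` and `∂ₓK` are
regular at `s k`, that `G(x₀, ·)` and `2ωK` have the same residue `2ħ K(x₀, s k)` there. The
equation then reads `ħ ∂ₓK + V′ K + 1/(x - x₀) = 2ħ ∑ⱼ dslope K (s j)`, an identity between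
functions continuous at every `s i`; evaluating it at `s i`, where
`dslope K (s i) (s i) = ∂ₓK(s i)`, gives the formula.
-/

open Finset Polynomial Filter Topology

theorem ContinuousAt.eq_of_eventuallyEq_nhdsNE {X Y : Type*} [TopologicalSpace X]
    [TopologicalSpace Y] [T2Space Y] {f g : X → Y} {a : X} [(𝓝[≠] a).NeBot]
    (hf : ContinuousAt f a) (hg : ContinuousAt g a) (h : f =ᶠ[𝓝[≠] a] g) : f a = g a :=
  tendsto_nhds_unique ((hf.tendsto.mono_left nhdsWithin_le_nhds).congr' h)
    (hg.tendsto.mono_left nhdsWithin_le_nhds)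

section Residues

variable {𝕜 : Type*} [NontriviallyNormedField 𝕜]

theorem residue_eq_zero_of_continuousAt {f g : 𝕜 → 𝕜} {a c : 𝕜} (hf : ContinuousAt f a)
    (hg : ContinuousAt g a) (h : ∀ᶠ x in 𝓝[≠] a, f x = g x + c / (x - a)) : c = 0 := by
  have hmul : ContinuousAt (fun x => (x - a) * (f x - g x)) a := by fun_prop
  have hc := hmul.eq_of_eventuallyEq_nhdsNE continuousAt_const <| by
    filter_upwards [h, self_mem_nhdsWithin] with x hx hxa
    rw [hx, add_sub_cancel_left, mul_div_cancel₀ _ (sub_ne_zero.mpr hxa)]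
  simpa using hc.symm

theorem residues_eq_zero_of_continuousAt {ι : Type*} [Fintype ι] {s : ι → 𝕜}
    (hs : Function.Injective s) {f g : 𝕜 → 𝕜} {c : ι → 𝕜} (hf : ∀ k, ContinuousAt f (s k))
    (hg : ∀ k, ContinuousAt g (s k))
    (h : ∀ k, ∀ᶠ x in 𝓝[≠] s k, f x = g x + ∑ j, c j / (x - s j)) (k : ι) : c k = 0 := by
  classical
  have hpoles : ContinuousAt (fun x => ∑ j ∈ univ.erase k, c j / (x - s j)) (s k) := by
    refine tendsto_finsetSum _ fun j hj => continuousAt_const.div (by fun_prop) ?_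
    exact sub_ne_zero.mpr (hs.ne (ne_of_mem_erase hj).symm)
  refine residue_eq_zero_of_continuousAt (hf k) ((hg k).add hpoles) ?_
  filter_upwards [h k] with x hx
  rw [hx, ← add_sum_erase _ _ (mem_univ k), Pi.add_apply]
  ring

end Residues

section DSlope

variable {𝕜 : Type*} [NontriviallyNormedField 𝕜] {ι : Type*} [Fintype ι] {s : ι → 𝕜}
  {f : 𝕜 → 𝕜}

theorem continuousAt_sum_dslope (hs : Function.Injective s) {k : ι}
    (hf : DifferentiableAt 𝕜 f (s k)) : ContinuousAt (fun x => ∑ j, dslope f (s j) x) (s k) := by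
  refine tendsto_finsetSum _ fun j _ => ?_
  rcases eq_or_ne k j with rfl | hkj
  · exact continuousAt_dslope_same.mpr hf
  · exact (continuousAt_dslope_of_ne (hs.ne hkj)).mpr hf.continuousAt

theorem sum_dslope_apply_self [DecidableEq ι] (hs : Function.Injective s) (i : ι) :
    ∑ j, dslope f (s j) (s i)
      = deriv f (s i) + ∑ j ∈ univ.erase i, (f (s i) - f (s j)) / (s i - s j) := by
  rw [← add_sum_erase _ _ (mem_univ i), dslope_same]
  refine congrArg _ (sum_congr rfl fun j hj => ?_)
  rw [dslope_of_ne _ (hs.ne (ne_of_mem_erase hj).symm), slope_def_field]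

theorem sum_dslope_of_forall_ne {x : 𝕜} (hx : ∀ j, x ≠ s j) :
    ∑ j, dslope f (s j) x = ∑ j, (f x - f (s j)) / (x - s j) :=
  sum_congr rfl fun j _ => by rw [dslope_of_ne _ (hx j), slope_def_field]

end DSlope

theorem kernel_ode_eq_sum_dslope_add_poles {ι : Type*} [Fintype ι] {hbar x x₀ d v : ℂ}
    {s : ι → ℂ} {A : Matrix ι ι ℂ} {K : ℂ → ℂ} (hx : ∀ j, x ≠ s j)
    (h : hbar * d = (2 * (hbar * ∑ i, 1 / (x - s i)) - v) * K x
      - (1 / (x - x₀) + 2 * ∑ i, ∑ j, A i j / ((x - s i) * (x₀ - s j) ^ 2))) :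
    hbar * d + v * K x + 1 / (x - x₀)
      = 2 * hbar * ∑ j, dslope K (s j) x
        + ∑ j, 2 * (hbar * K (s j) - ∑ l, A j l / (x₀ - s l) ^ 2) / (x - s j) := by
  have hG : ∑ i, ∑ j, A i j / ((x - s i) * (x₀ - s j) ^ 2)
      = ∑ i, (∑ j, A i j / (x₀ - s j) ^ 2) / (x - s i) := by
    simp only [sum_div, div_div, mul_comm]
  have hpoles : ∀ j, 2 * hbar * ((K x - K (s j)) / (x - s j))
        + 2 * (hbar * K (s j) - ∑ l, A j l / (x₀ - s l) ^ 2) / (x - s j)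
      = 2 * (hbar * (1 / (x - s j))) * K x - 2 * ((∑ l, A j l / (x₀ - s l) ^ 2) / (x - s j)) :=
    fun j => by ring
  rw [sum_dslope_of_forall_ne hx, mul_sum, ← sum_add_distrib, sum_congr rfl fun j _ => hpoles j,
    sum_sub_distrib, ← sum_mul, ← mul_sum, ← mul_sum, ← mul_sum, h, hG]
  ring

theorem kernel_derivative_at_si (m : ℕ) (hbar : ℂ) (V : Polynomial ℂ)
    (s : Fin m → ℂ) (hs : Function.Injective s)
    (A : Matrix (Fin m) (Fin m) ℂ)
    (x₀ : ℂ) (hx₀ : ∀ i, x₀ ≠ s i)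
    (U : Set ℂ) (K : ℂ → ℂ) (hU : IsOpen U) (hSU : ∀ i, s i ∈ U)
    (hK : DifferentiableOn ℂ K U)
    (hODE : ∀ x ∈ U, (∀ i, x ≠ s i) → x ≠ x₀ →
      hbar * deriv K x
        = (2 * (hbar * ∑ i, 1 / (x - s i)) - V.derivative.eval x) * K x
          - (1 / (x - x₀) + 2 * ∑ i, ∑ j, A i j / ((x - s i) * (x₀ - s j) ^ 2))) :
    ∀ i, hbar * deriv K (s i)
      = -1 / (x₀ - s i) + V.derivative.eval (s i) * K (s i)
        - 2 * hbar * ∑ j ∈ univ.erase i, (K (s i) - K (s j)) / (s i - s j) := by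
  intro i
  set L : ℂ → ℂ := fun x => hbar * deriv K x + V.derivative.eval x * K x + 1 / (x - x₀)
  set R : ℂ → ℂ := fun x => 2 * hbar * ∑ j, dslope K (s j) x
  have hKs : ∀ k, DifferentiableAt ℂ K (s k) := fun k => hK.differentiableAt (hU.mem_nhds (hSU k))
  have hL : ∀ k, ContinuousAt L (s k) := fun k => by
    have hK' := ((hK.analyticOnNhd hU).deriv (s k) (hSU k)).continuousAt
    have := (hKs k).continuousAt
    have := sub_ne_zero.mpr (hx₀ k).symm
    simp only [L]
    fun_prop (disch := assumption)
  have hR : ∀ k, ContinuousAt R (s k) :=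
    fun k => continuousAt_const.mul (continuousAt_sum_dslope hs (hKs k))
  have hLR : ∀ k, ∀ᶠ x in 𝓝[≠] s k, L x = R x
      + ∑ j, 2 * (hbar * K (s j) - ∑ l, A j l / (x₀ - s l) ^ 2) / (x - s j) := fun k => by
    have hS : (insert x₀ (Set.range s)).Finite := (Set.finite_range s).insert x₀
    filter_upwards [nhdsWithin_le_nhds (hU.mem_nhds (hSU k)),
      nhdsNE_le_cofinite (s k) hS.eventually_cofinite_notMem] with x hxU hxS
    simp only [Set.mem_insert_iff, Set.mem_range, not_or, not_exists] at hxS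
    have hxs : ∀ j, x ≠ s j := fun j => Ne.symm (hxS.2 j)
    exact kernel_ode_eq_sum_dslope_add_poles hxs (hODE x hxU hxs hxS.1)
  have hres := residues_eq_zero_of_continuousAt hs hL hR hLR
  have hLi : L (s i) = R (s i) := by
    refine (hL i).eq_of_eventuallyEq_nhdsNE (hR i) ?_
    filter_upwards [hLR i] with x hx
    simp [hx, hres]
  have hpole : 1 / (s i - x₀) = -1 / (x₀ - s i) := by rw [← neg_sub x₀, div_neg, neg_div]
  simp only [L, R, hpole, sum_dslope_apply_self hs i] at hLi
  linear_combination -hLi
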